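/- Let K(x) = (1/2)∫_{|x|}^∞ e^{-t}/t dt. Then ∫_{-∞}^∞ K(x)² dx = log 2. -/

import Mathlib

/-!
Write `E1 x = ∫_x^∞ e^{-t}/t dt`, so that `K x = E1 |x| / 2` and
`∫ K² = (1/2) ∫_0^∞ E1²`. Since `E1' x = -e^{-x}/x`, integrating `1 · E1²` by parts and using that
`e^{-x} E1 x - E1 (2x)` is a primitive of `-e^{-x} E1 x` shows that
`F x = x E1(x)² - 2 (e^{-x} E1 x - E1 (2x))` is a primitive of `E1²`. Now `F → 0` at `∞`,
while at `0⁺` the bound `E1 x ≤ 1 - log x` kills `x E1(x)²` and `(1 - e^{-x}) E1 x`, and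
`E1 x - E1 (2x) = ∫_x^{2x} e^{-t}/t dt → log 2`. Hence `∫_0^∞ E1² = 2 log 2`; integrability
comes for free since the integrand is nonnegative.
-/

open MeasureTheory Real Set Filter

noncomputable def K (x : ℝ) : ℝ := (1/2) * ∫ t in Set.Ioi |x|, Real.exp (-t) / t

open scoped Topology

theorem integral_Ioi_of_hasDerivAt_of_nonneg_of_tendsto_nhdsGT {g g' : ℝ → ℝ} {a l₀ l : ℝ}
    (hg₀ : Tendsto g (𝓝[>] a) (𝓝 l₀)) (hderiv : ∀ x ∈ Ioi a, HasDerivAt g (g' x) x)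
    (g'_nonneg : ∀ x ∈ Ioi a, 0 ≤ g' x) (hg : Tendsto g atTop (𝓝 l)) :
    ∫ x in Ioi a, g' x = l - l₀ := by
  have hcont : ContinuousWithinAt (Function.update g a l₀) (Ici a) a := by
    rwa [continuousWithinAt_update_same, Ici_sdiff_left]
  have heq : Function.update g a l₀ =ᶠ[atTop] g :=
    (eventually_ne_atTop a).mono fun x hx => Function.update_of_ne hx _ _
  have hderiv' : ∀ x ∈ Ioi a, HasDerivAt (Function.update g a l₀) (g' x) x := fun x hx =>
    (hderiv x hx).congr_of_eventuallyEq <|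
      (eventually_ne_nhds (ne_of_gt hx)).mono fun y hy => Function.update_of_ne hy _ _
  simpa using integral_Ioi_of_hasDerivAt_of_nonneg hcont hderiv' g'_nonneg (hg.congr' heq.symm)

noncomputable def E1 (x : ℝ) : ℝ := ∫ t in Ioi x, exp (-t) / t

lemma integrableOn_exp_neg_div_Ioi {c : ℝ} (hc : 0 < c) :
    IntegrableOn (fun t => exp (-t) / t) (Ioi c) := by
  refine Integrable.mono' ((exp_neg_integrableOn_Ioi c one_pos).const_mul c⁻¹) ?_ ?_
  · exact (ContinuousOn.div (by fun_prop) continuousOn_id fun t ht => (hc.trans ht).ne')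
      |>.aestronglyMeasurable measurableSet_Ioi
  · refine (ae_restrict_iff' measurableSet_Ioi).2 (ae_of_all _ fun t (ht : c < t) => ?_)
    have ht₀ := hc.trans ht
    rw [norm_of_nonneg (by positivity), neg_one_mul, div_eq_inv_mul]
    gcongr

lemma intervalIntegrable_exp_neg_div {a b : ℝ} (ha : 0 < a) (hb : 0 < b) :
    IntervalIntegrable (fun t => exp (-t) / t) volume a b :=
  ContinuousOn.intervalIntegrable <| ContinuousOn.div (by fun_prop) continuousOn_id
    fun t ht => (lt_min ha hb |>.trans_le ht.1).ne'

lemma E1_sub_E1 {x y : ℝ} (hx : 0 < x) (hy : 0 < y) :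
    E1 x - E1 y = ∫ t in x..y, exp (-t) / t :=
  intervalIntegral.integral_Ioi_sub_Ioi' (integrableOn_exp_neg_div_Ioi hx)
    (integrableOn_exp_neg_div_Ioi hy)

lemma hasDerivAt_E1 {x : ℝ} (hx : 0 < x) : HasDerivAt E1 (-(exp (-x) / x)) x := by
  have hcont : ContinuousOn (fun t => exp (-t) / t) (Ioi 0) :=
    ContinuousOn.div (by fun_prop) continuousOn_id fun t ht => ht.ne'
  have hprim : HasDerivAt (fun y => E1 x - ∫ t in x..y, exp (-t) / t) (-(exp (-x) / x)) x :=
    (intervalIntegral.integral_hasDerivAt_right IntervalIntegrable.refl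
      (hcont.stronglyMeasurableAtFilter isOpen_Ioi x hx)
      (hcont.continuousAt (isOpen_Ioi.mem_nhds hx))).const_sub _
  refine hprim.congr_of_eventuallyEq ?_
  filter_upwards [isOpen_Ioi.mem_nhds hx] with y (hy : 0 < y)
  rw [← E1_sub_E1 hx hy, sub_sub_cancel]

lemma E1_nonneg {x : ℝ} (hx : 0 ≤ x) : 0 ≤ E1 x :=
  setIntegral_nonneg measurableSet_Ioi fun t (ht : x < t) =>
    div_nonneg (exp_pos _).le (hx.trans ht.le)

lemma E1_le_exp_neg {x : ℝ} (hx : 1 ≤ x) : E1 x ≤ exp (-x) := by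
  rw [← integral_exp_neg_Ioi]
  refine setIntegral_mono_on (integrableOn_exp_neg_div_Ioi (one_pos.trans_le hx))
    (by simpa using exp_neg_integrableOn_Ioi x one_pos) measurableSet_Ioi fun t ht => ?_
  exact div_le_self (exp_pos _).le (hx.trans (le_of_lt ht))

lemma E1_sub_E1_le_log {a b : ℝ} (ha : 0 < a) (hab : a ≤ b) :
    E1 a - E1 b ≤ log (b / a) := by
  have hb := ha.trans_le hab
  rw [E1_sub_E1 ha hb, ← integral_inv_of_pos ha hb]
  refine intervalIntegral.integral_mono_on hab (intervalIntegrable_exp_neg_div ha hb)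
    (intervalIntegrable_inv_iff.2 (.inr (notMem_uIcc_of_lt ha hb))) fun t ht => ?_
  have ht₀ := ha.trans_le ht.1
  rw [div_eq_mul_inv]
  exact mul_le_of_le_one_left (inv_nonneg.2 ht₀.le) (exp_le_one_iff.2 (by linarith))

lemma exp_neg_mul_log_le_E1_sub_E1 {a b : ℝ} (ha : 0 < a) (hab : a ≤ b) :
    exp (-b) * log (b / a) ≤ E1 a - E1 b := by
  have hb := ha.trans_le hab
  have hinv := intervalIntegrable_inv_iff.2 (.inr (notMem_uIcc_of_lt ha hb))
  rw [E1_sub_E1 ha hb, ← integral_inv_of_pos ha hb, ← intervalIntegral.integral_const_mul]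
  refine intervalIntegral.integral_mono_on hab (hinv.const_mul _)
    (intervalIntegrable_exp_neg_div ha hb) fun t ht => ?_
  have ht₀ := ha.trans_le ht.1
  rw [div_eq_mul_inv]
  gcongr
  exact ht.2

lemma E1_le_one_sub_log {x : ℝ} (hx : 0 < x) (hx₁ : x ≤ 1) : E1 x ≤ 1 - log x := by
  have h₁ : E1 1 ≤ 1 := (E1_le_exp_neg le_rfl).trans (exp_le_one_iff.2 (by norm_num))
  have := E1_sub_E1_le_log hx hx₁
  rw [one_div, log_inv] at this
  linarith

lemma tendsto_rpow_mul_E1_nhdsGT_zero {r : ℝ} (hr : 0 < r) :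
    Tendsto (fun x => x ^ r * E1 x) (𝓝[>] 0) (𝓝 0) := by
  have hpow : Tendsto (fun x : ℝ => x ^ r) (𝓝[>] 0) (𝓝 0) := by
    simpa [zero_rpow hr.ne'] using
      ((continuousAt_rpow_const 0 r (.inr hr.le)).tendsto).mono_left nhdsWithin_le_nhds
  have hbound : Tendsto (fun x => x ^ r - log x * x ^ r) (𝓝[>] 0) (𝓝 0) := by
    simpa using hpow.sub (tendsto_log_mul_rpow_nhdsGT_zero hr)
  refine squeeze_zero' ?_ ?_ hbound
  · filter_upwards [self_mem_nhdsWithin] with x (hx : 0 < x)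
    exact mul_nonneg (rpow_nonneg hx.le r) (E1_nonneg hx.le)
  · filter_upwards [self_mem_nhdsWithin, Ioo_mem_nhdsGT one_pos] with x (hx : 0 < x) hx₁
    calc x ^ r * E1 x ≤ x ^ r * (1 - log x) :=
          mul_le_mul_of_nonneg_left (E1_le_one_sub_log hx hx₁.2.le) (rpow_nonneg hx.le r)
      _ = x ^ r - log x * x ^ r := by ring

lemma tendsto_E1_sub_E1_two_mul_nhdsGT_zero :
    Tendsto (fun x => E1 x - E1 (2 * x)) (𝓝[>] 0) (𝓝 (log 2)) := by
  have hlower : Tendsto (fun x => exp (-(2 * x)) * log 2) (𝓝[>] 0) (𝓝 (log 2)) := by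
    simpa using ((by fun_prop : Continuous fun x : ℝ => exp (-(2 * x)) * log 2).tendsto 0)
      |>.mono_left nhdsWithin_le_nhds
  refine tendsto_of_tendsto_of_tendsto_of_le_of_le' hlower tendsto_const_nhds ?_ ?_ <;>
    filter_upwards [self_mem_nhdsWithin] with x (hx : 0 < x)
  · simpa [hx.ne'] using exp_neg_mul_log_le_E1_sub_E1 hx (by linarith : x ≤ 2 * x)
  · simpa [hx.ne'] using E1_sub_E1_le_log hx (by linarith : x ≤ 2 * x)

lemma tendsto_E1_atTop : Tendsto E1 atTop (𝓝 0) :=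
  squeeze_zero' ((eventually_ge_atTop 0).mono fun _ hx => E1_nonneg hx)
    ((eventually_ge_atTop 1).mono fun _ hx => E1_le_exp_neg hx) tendsto_exp_neg_atTop_nhds_zero

lemma tendsto_mul_E1_atTop : Tendsto (fun x => x * E1 x) atTop (𝓝 0) := by
  refine squeeze_zero' ((eventually_ge_atTop 0).mono fun x hx => mul_nonneg hx (E1_nonneg hx))
    ((eventually_ge_atTop 1).mono fun x hx => ?_)
    (by simpa using tendsto_pow_mul_exp_neg_atTop_nhds_zero 1)
  exact mul_le_mul_of_nonneg_left (E1_le_exp_neg hx) (zero_le_one.trans hx)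

noncomputable def primitiveE1Sq (x : ℝ) : ℝ := x * E1 x ^ 2 - 2 * (exp (-x) * E1 x - E1 (2 * x))

lemma hasDerivAt_primitiveE1Sq {x : ℝ} (hx : 0 < x) :
    HasDerivAt primitiveE1Sq (E1 x ^ 2) x := by
  have h2x : HasDerivAt (fun y => E1 (2 * y)) (-(exp (-(2 * x)) / (2 * x)) * (2 * 1)) x :=
    (hasDerivAt_E1 (by positivity)).comp x ((hasDerivAt_id x).const_mul 2)
  refine HasDerivAt.congr_deriv (f := primitiveE1Sq)
    (((hasDerivAt_id x).mul ((hasDerivAt_E1 hx).pow 2)).sub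
      ((((hasDerivAt_neg x).exp.mul (hasDerivAt_E1 hx)).sub h2x).const_mul 2)) ?_
  have hexp : exp (-(2 * x)) = exp (-x) * exp (-x) := by rw [← exp_add]; ring_nf
  simp only [Pi.pow_apply, id, hexp]
  field_simp
  ring

lemma tendsto_primitiveE1Sq_atTop : Tendsto primitiveE1Sq atTop (𝓝 0) := by
  have h2x := tendsto_E1_atTop.comp (tendsto_id.const_mul_atTop two_pos)
  unfold primitiveE1Sq
  simpa [sq, mul_assoc] using (tendsto_mul_E1_atTop.mul tendsto_E1_atTop).sub
    (((tendsto_exp_neg_atTop_nhds_zero.mul tendsto_E1_atTop).sub h2x).const_mul 2)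

lemma tendsto_primitiveE1Sq_nhdsGT_zero :
    Tendsto primitiveE1Sq (𝓝[>] 0) (𝓝 (-(2 * log 2))) := by
  have hsq : Tendsto (fun x => x * E1 x ^ 2) (𝓝[>] 0) (𝓝 0) := by
    have h := (tendsto_rpow_mul_E1_nhdsGT_zero one_half_pos).pow 2
    rw [zero_pow two_ne_zero] at h
    refine h.congr' ?_
    filter_upwards [self_mem_nhdsWithin] with x (hx : 0 < x)
    rw [mul_pow, ← sqrt_eq_rpow, sq_sqrt hx.le]
  have hexp : Tendsto (fun x => (1 - exp (-x)) * E1 x) (𝓝[>] 0) (𝓝 0) := by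
    refine squeeze_zero' ?_ ?_ (by simpa using tendsto_rpow_mul_E1_nhdsGT_zero one_pos) <;>
      filter_upwards [self_mem_nhdsWithin] with x (hx : 0 < x)
    · exact mul_nonneg (by simpa using hx.le) (E1_nonneg hx.le)
    · exact mul_le_mul_of_nonneg_right (by linarith [add_one_le_exp (-x)]) (E1_nonneg hx.le)
  have h := (hsq.add (hexp.const_mul 2)).sub (tendsto_E1_sub_E1_two_mul_nhdsGT_zero.const_mul 2)
  rw [mul_zero, zero_add, zero_sub] at h
  refine h.congr' (.of_forall fun x => ?_)
  simp only [primitiveE1Sq]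
  ring

theorem integral_K_sq : (∫ x : ℝ, (K x)^2) = Real.log 2 := by
  have hK : ∀ x, K x ^ 2 = 4⁻¹ * E1 |x| ^ 2 := fun x => by
    simp only [K, E1]
    ring
  have hE1 : ∫ x in Ioi 0, E1 x ^ 2 = 2 * log 2 := by
    simpa using integral_Ioi_of_hasDerivAt_of_nonneg_of_tendsto_nhdsGT
      tendsto_primitiveE1Sq_nhdsGT_zero (fun x hx => hasDerivAt_primitiveE1Sq hx)
      (fun x _ => sq_nonneg (E1 x)) tendsto_primitiveE1Sq_atTop
  rw [integral_congr_ae (.of_forall hK), integral_comp_abs (f := fun y => 4⁻¹ * E1 y ^ 2),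
    integral_const_mul, hE1]
  ring
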